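/- arXiv:1808.02962 — 7 statements merged into one kernel-verified Lean document; each statement's English description precedes it below -/
import Mathlib

section
/- Suppose that for every N ∈ ℕ there is a tuple γ*_N = (γ^{1*}_N,…,γ^{N*}_N) that is team optimal for (P_N), i.e. J_N(γ*_N) = inf over all N-tuples of policies of J_N. If there exists a policy sequence γ* = (γ^{i*})_{i∈ℕ} with J(γ*) < ∞ satisfying limsup_{N→∞} J_N(γ*_N) ≥ J(γ*), then γ* is globally team optimal for (P_∞): J(γ*) = inf over all policy sequences γ of J(γ). -/
open MeasureTheory Filter ENNReal

/-- The `N`-decision-maker expected cost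
`J_N(γ) = (1/N) E[ Σ_{i<N} c(ω₀, γ^i(v^i), (1/N) Σ_{p<N} γ^p(v^p)) ]`,
valued in `ℝ≥0∞` (the cost `c` is `[0,∞)`-valued). -/
noncomputable def teamCostN {Ω Ω₀ : Type*} [MeasurableSpace Ω] [MeasurableSpace Ω₀]
    (P : Measure Ω) (ω₀ : Ω → Ω₀) {m n : ℕ}
    (v : ℕ → Ω → (Fin m → ℝ))
    (c : Ω₀ → (Fin n → ℝ) → (Fin n → ℝ) → ℝ)
    (γ : ℕ → (Fin m → ℝ) → (Fin n → ℝ)) (N : ℕ) : ℝ≥0∞ :=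
  (N : ℝ≥0∞)⁻¹ *
    ∫⁻ ω, ENNReal.ofReal (∑ i ∈ Finset.range N,
      c (ω₀ ω) (γ i (v i ω)) ((N : ℝ)⁻¹ • ∑ p ∈ Finset.range N, γ p (v p ω))) ∂P

/-- The infinite-team cost `J(γ) = limsup_{N→∞} J_N(γ¹,…,γ^N)`. -/
noncomputable def teamCost {Ω Ω₀ : Type*} [MeasurableSpace Ω] [MeasurableSpace Ω₀]
    (P : Measure Ω) (ω₀ : Ω → Ω₀) {m n : ℕ}
    (v : ℕ → Ω → (Fin m → ℝ))
    (c : Ω₀ → (Fin n → ℝ) → (Fin n → ℝ) → ℝ)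
    (γ : ℕ → (Fin m → ℝ) → (Fin n → ℝ)) : ℝ≥0∞ :=
  Filter.limsup (teamCostN P ω₀ v c γ) Filter.atTop

theorem stmt1 {Ω Ω₀ : Type*} [MeasurableSpace Ω] [MeasurableSpace Ω₀]
    (P : Measure Ω) [IsProbabilityMeasure P]
    (ω₀ : Ω → Ω₀) (hω₀ : Measurable ω₀) (m n : ℕ)
    (v : ℕ → Ω → (Fin m → ℝ)) (hv : ∀ i, Measurable (v i))
    (c : Ω₀ → (Fin n → ℝ) → (Fin n → ℝ) → ℝ)
    (hc_meas : Measurable (fun p : Ω₀ × (Fin n → ℝ) × (Fin n → ℝ) => c p.1 p.2.1 p.2.2))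
    (hc_nonneg : ∀ w u μ', 0 ≤ c w u μ')
    -- for every `N`, a team-optimal tuple `γ*_N` for (P_N)
    (γN : ℕ → ℕ → (Fin m → ℝ) → (Fin n → ℝ))
    (hγN_meas : ∀ N i, Measurable (γN N i))
    (hγN_opt : ∀ N, teamCostN P ω₀ v c (γN N) N =
      ⨅ δ : {δ : ℕ → (Fin m → ℝ) → (Fin n → ℝ) // ∀ i, Measurable (δ i)},
        teamCostN P ω₀ v c δ.1 N)
    -- a policy sequence `γ*` with finite cost …
    (γstar : ℕ → (Fin m → ℝ) → (Fin n → ℝ))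
    (hγstar_meas : ∀ i, Measurable (γstar i))
    (hJfin : teamCost P ω₀ v c γstar < ⊤)
    -- … satisfying `limsup_N J_N(γ*_N) ≥ J(γ*)`
    (hlim : teamCost P ω₀ v c γstar ≤
      Filter.limsup (fun N => teamCostN P ω₀ v c (γN N) N) Filter.atTop) :
    -- then `γ*` is globally team optimal for (P_∞)
    teamCost P ω₀ v c γstar =
      ⨅ γ : {γ : ℕ → (Fin m → ℝ) → (Fin n → ℝ) // ∀ i, Measurable (γ i)},
        teamCost P ω₀ v c γ.1 := by
  have hge : (⨅ γ : {γ : ℕ → (Fin m → ℝ) → (Fin n → ℝ) // ∀ i, Measurable (γ i)},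
      teamCost P ω₀ v c γ.1) ≤ teamCost P ω₀ v c γstar :=
    iInf_le (fun γ : {γ : ℕ → (Fin m → ℝ) → (Fin n → ℝ) // ∀ i, Measurable (γ i)} =>
      teamCost P ω₀ v c γ.1) ⟨γstar, hγstar_meas⟩
  refine le_antisymm (le_iInf fun γ => ?_) hge
  have h : ∀ N, teamCostN P ω₀ v c (γN N) N ≤ teamCostN P ω₀ v c γ.1 N := by
    intro N
    rw [hγN_opt N]
    exact iInf_le (fun δ : {δ : ℕ → (Fin m → ℝ) → (Fin n → ℝ) // ∀ i, Measurable (δ i)} =>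
      teamCostN P ω₀ v c δ.1 N) γ
  calc teamCost P ω₀ v c γstar
      ≤ Filter.limsup (fun N => teamCostN P ω₀ v c (γN N) N) Filter.atTop := hlim
    _ ≤ Filter.limsup (fun N => teamCostN P ω₀ v c γ.1 N) Filter.atTop :=
        Filter.limsup_le_limsup (Filter.Eventually.of_forall h)
    _ = teamCost P ω₀ v c γ.1 := rfl
end

section
/- Suppose that for every N ∈ ℕ there is a tuple γ*_N = (γ^{1*}_N,…,γ^{N*}_N) that is team optimal for (P_N). Suppose (A2): for the policy sequence γ* = (γ^{i*})_{i∈ℕ} the limit lim_{N→∞} (1/N) Σ_{i=1}^N E[c(ω₀, γ^{i*}(v^i), (1/N)Σ_{p=1}^N γ^{p*}(v^p))] exists and is finite. If limsup_{N→∞} (1/N) Σ_{i=1}^N ( E[c(ω₀, γ^{i*}_N(v^i), (1/N)Σ_{p=1}^N γ^{p*}_N(v^p))] − E[c(ω₀, γ^{i*}(v^i), (1/N)Σ_{p=1}^N γ^{p*}(v^p))] ) ≥ 0, then γ* is globally team optimal for (P_∞). -/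
open MeasureTheory Filter ENNReal

/-! Optimality of `γ*_N` gives `J_N(γ*_N) ≤ J_N(γ)` for every policy sequence `γ`, hence
`limsup_N J_N(γ*_N) ≤ J(γ)`. Since `J_N(γ*) → L < ∞`, the hypothesis
`limsup_N (J_N(γ*_N) - J_N(γ*)) ≥ 0` shifts to `limsup_N J_N(γ*_N) ≥ L = J(γ*)`. -/

open Topology in
theorem ENNReal.le_limsup_of_tendsto_of_nonneg_limsup_sub {α : Type*} {f : Filter α} [f.NeBot]
    {a b : α → ℝ≥0∞} {L : ℝ≥0∞} (hL : L ≠ ∞) (hb : Tendsto b f (𝓝 L))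
    (h : 0 ≤ limsup (fun x => (a x : EReal) - b x) f) :
    L ≤ limsup a f := by
  have hb_fin : ∀ᶠ x in f, b x ≠ ∞ := hb.eventually_ne hL
  have hbE : Tendsto (fun x => (b x : EReal)) f (𝓝 L) :=
    (continuous_coe_ennreal_ereal.tendsto L).comp hb
  have hcancel : (fun x => ((a x : EReal) - b x) + b x) =ᶠ[f] fun x => (a x : EReal) := by
    filter_upwards [hb_fin] with x hx
    rw [← EReal.coe_ennreal_toReal hx, EReal.sub_add_cancel]
  rw [← EReal.coe_ennreal_le_coe_ennreal_iff,
    EReal.coe_ennreal_strictMono.monotone.map_limsup_of_continuousAt a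
      continuous_coe_ennreal_ereal.continuousAt]
  calc (L : EReal) = 0 + L := (zero_add _).symm
    _ ≤ limsup (fun x => (a x : EReal) - b x) f + liminf (fun x => (b x : EReal)) f := by
      rw [hbE.liminf_eq]; gcongr
    _ ≤ limsup (fun x => ((a x : EReal) - b x) + b x) f := EReal.le_limsup_add
    _ = limsup (fun x => (a x : EReal)) f := limsup_congr hcancel

theorem stmt2_general {Ω Ω₀ : Type*} [MeasurableSpace Ω] [MeasurableSpace Ω₀]
    (P : Measure Ω)
    (ω₀ : Ω → Ω₀) (m n : ℕ)
    (v : ℕ → Ω → (Fin m → ℝ))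
    (c : Ω₀ → (Fin n → ℝ) → (Fin n → ℝ) → ℝ)
    -- for every `N`, a team-optimal tuple `γ*_N` for (P_N)
    (γN : ℕ → ℕ → (Fin m → ℝ) → (Fin n → ℝ))
    (hγN_opt : ∀ N, teamCostN P ω₀ v c (γN N) N =
      ⨅ δ : {δ : ℕ → (Fin m → ℝ) → (Fin n → ℝ) // ∀ i, Measurable (δ i)},
        teamCostN P ω₀ v c δ.1 N)
    -- the candidate policy sequence `γ*`
    (γstar : ℕ → (Fin m → ℝ) → (Fin n → ℝ))
    (hγstar_meas : ∀ i, Measurable (γstar i))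
    -- (A2): `lim_N J_N(γ*)` exists and is finite
    (hA2 : ∃ L : ℝ≥0∞, L ≠ ⊤ ∧
      Filter.Tendsto (fun N => teamCostN P ω₀ v c γstar N) Filter.atTop (nhds L))
    -- `limsup_N ( J_N(γ*_N) − J_N(γ*) ) ≥ 0`
    (hlim : (0 : EReal) ≤ Filter.limsup
      (fun N => ((teamCostN P ω₀ v c (γN N) N : ℝ≥0∞) : EReal)
        - ((teamCostN P ω₀ v c γstar N : ℝ≥0∞) : EReal)) Filter.atTop) :
    -- then `γ*` is globally team optimal for (P_∞)
    teamCost P ω₀ v c γstar =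
      ⨅ γ : {γ : ℕ → (Fin m → ℝ) → (Fin n → ℝ) // ∀ i, Measurable (γ i)},
        teamCost P ω₀ v c γ.1 := by
  obtain ⟨L, hL_fin, hL⟩ := hA2
  refine le_antisymm (le_iInf fun γ => ?_)
    (iInf_le (fun γ : Subtype _ => teamCost P ω₀ v c γ.1) ⟨γstar, hγstar_meas⟩)
  have hγN_le : ∀ N, teamCostN P ω₀ v c (γN N) N ≤ teamCostN P ω₀ v c γ.1 N := fun N =>
    (hγN_opt N).trans_le (iInf_le (fun δ : Subtype _ => teamCostN P ω₀ v c δ.1 N) γ)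
  calc teamCost P ω₀ v c γstar = L := hL.limsup_eq
    _ ≤ limsup (fun N => teamCostN P ω₀ v c (γN N) N) atTop :=
      ENNReal.le_limsup_of_tendsto_of_nonneg_limsup_sub hL_fin hL hlim
    _ ≤ teamCost P ω₀ v c γ.1 := limsup_le_limsup (.of_forall hγN_le)

theorem stmt2 {Ω Ω₀ : Type*} [MeasurableSpace Ω] [MeasurableSpace Ω₀]
    (P : Measure Ω) [IsProbabilityMeasure P]
    (ω₀ : Ω → Ω₀) (hω₀ : Measurable ω₀) (m n : ℕ)
    (v : ℕ → Ω → (Fin m → ℝ)) (hv : ∀ i, Measurable (v i))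
    (c : Ω₀ → (Fin n → ℝ) → (Fin n → ℝ) → ℝ)
    (hc_meas : Measurable (fun p : Ω₀ × (Fin n → ℝ) × (Fin n → ℝ) => c p.1 p.2.1 p.2.2))
    (hc_nonneg : ∀ w u μ', 0 ≤ c w u μ')
    -- for every `N`, a team-optimal tuple `γ*_N` for (P_N)
    (γN : ℕ → ℕ → (Fin m → ℝ) → (Fin n → ℝ))
    (hγN_meas : ∀ N i, Measurable (γN N i))
    (hγN_opt : ∀ N, teamCostN P ω₀ v c (γN N) N =
      ⨅ δ : {δ : ℕ → (Fin m → ℝ) → (Fin n → ℝ) // ∀ i, Measurable (δ i)},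
        teamCostN P ω₀ v c δ.1 N)
    -- the candidate policy sequence `γ*`
    (γstar : ℕ → (Fin m → ℝ) → (Fin n → ℝ))
    (hγstar_meas : ∀ i, Measurable (γstar i))
    -- (A2): `lim_N J_N(γ*)` exists and is finite
    (hA2 : ∃ L : ℝ≥0∞, L ≠ ⊤ ∧
      Filter.Tendsto (fun N => teamCostN P ω₀ v c γstar N) Filter.atTop (nhds L))
    -- `limsup_N ( J_N(γ*_N) − J_N(γ*) ) ≥ 0`
    (hlim : (0 : EReal) ≤ Filter.limsup
      (fun N => ((teamCostN P ω₀ v c (γN N) N : ℝ≥0∞) : EReal)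
        - ((teamCostN P ω₀ v c γstar N : ℝ≥0∞) : EReal)) Filter.atTop) :
    -- then `γ*` is globally team optimal for (P_∞)
    teamCost P ω₀ v c γstar =
      ⨅ γ : {γ : ℕ → (Fin m → ℝ) → (Fin n → ℝ) // ∀ i, Measurable (γ i)},
        teamCost P ω₀ v c γ.1 :=
  stmt2_general P ω₀ m n v c γN hγN_opt γstar hγstar_meas hA2 hlim
end

section
/- Fix N ∈ ℕ and consider the N-DM team with expected cost J_N(γ¹,…,γ^N) = E[c(ω₀, γ¹(v¹),…,γ^N(v^N))]. Assume: the cost c(ω₀, u¹,…,u^N) is ℙ-almost surely convex in (u¹,…,u^N); c is ℙ-almost surely exchangeable in the actions, i.e. for every permutation σ of {1,…,N}, c(ω₀, u¹,…,u^N) = c(ω₀, u^{σ(1)},…,u^{σ(N)}) ℙ-a.s.; the action set U ⊆ ℝ^n is convex; and the observations are exchangeable conditioned on ω₀, i.e. for every permutation σ the joint law of (ω₀, v^{σ(1)},…,v^{σ(N)}) equals that of (ω₀, v¹,…,v^N). Then the team is symmetrically optimal: for every policy tuple (γ¹,…,γ^N) the identical tuple with common policy γ̃ = (1/N) Σ_{j=1}^N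 γ^j satisfies J_N(γ̃,…,γ̃) ≤ J_N(γ¹,…,γ^N). -/
open MeasureTheory Filter ENNReal

theorem stmt4 {Ω Ω₀ : Type*} [MeasurableSpace Ω] [MeasurableSpace Ω₀]
    (P : Measure Ω) [IsProbabilityMeasure P]
    (ω₀ : Ω → Ω₀) (hω₀ : Measurable ω₀)
    (N m n : ℕ) (hN : 0 < N)
    (v : Fin N → Ω → (Fin m → ℝ)) (hv : ∀ i, Measurable (v i))
    -- the action set `U` is convex
    (U : Set (Fin n → ℝ)) (hU : Convex ℝ U)
    (c : Ω₀ → (Fin N → (Fin n → ℝ)) → ℝ)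
    (hc_meas : Measurable (fun p : Ω₀ × (Fin N → (Fin n → ℝ)) => c p.1 p.2))
    (hc_nonneg : ∀ w u, 0 ≤ c w u)
    -- `c` is `ℙ`-a.s. convex in the actions
    (hconv : ∀ᵐ ω ∂P,
      ConvexOn ℝ {u : Fin N → (Fin n → ℝ) | ∀ i, u i ∈ U} (c (ω₀ ω)))
    -- `c` is `ℙ`-a.s. exchangeable in the actions
    (hexch : ∀ σ : Equiv.Perm (Fin N), ∀ᵐ ω ∂P,
      ∀ u : Fin N → (Fin n → ℝ), (∀ i, u i ∈ U) →
        c (ω₀ ω) u = c (ω₀ ω) (fun i => u (σ i)))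
    -- the observations are exchangeable conditioned on `ω₀`
    (hobs : ∀ σ : Equiv.Perm (Fin N),
      Measure.map (fun ω => (ω₀ ω, fun i => v (σ i) ω)) P =
        Measure.map (fun ω => (ω₀ ω, fun i => v i ω)) P)
    -- a given policy tuple, Borel measurable and `U`-valued
    (γ : Fin N → (Fin m → ℝ) → (Fin n → ℝ))
    (hγ_meas : ∀ i, Measurable (γ i)) (hγ_U : ∀ i x, γ i x ∈ U) :
    -- the identical tuple with common policy `γ̃ = (1/N) Σ_j γ^j` is at least as good
    ∫⁻ ω, ENNReal.ofReal
        (c (ω₀ ω) (fun i => (N : ℝ)⁻¹ • ∑ j : Fin N, γ j (v i ω))) ∂P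
      ≤ ∫⁻ ω, ENNReal.ofReal (c (ω₀ ω) (fun i => γ i (v i ω))) ∂P := by

  haveI : NeZero N := ⟨hN.ne'⟩
  set g : Ω₀ × (Fin N → Fin m → ℝ) → ℝ≥0∞ :=
    fun p => ENNReal.ofReal (c p.1 (fun i => γ i (p.2 i))) with hg_def
  have hg : Measurable g := by
    apply Measurable.ennreal_ofReal
    exact hc_meas.comp (measurable_fst.prodMk (measurable_pi_lambda _ fun i =>
      (hγ_meas i).comp ((measurable_pi_apply i).comp measurable_snd)))
  have hmeasσ : ∀ σ : Equiv.Perm (Fin N),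
      Measurable fun ω => ENNReal.ofReal (c (ω₀ ω) (fun i => γ (σ i) (v i ω))) := by
    intro σ
    apply Measurable.ennreal_ofReal
    exact hc_meas.comp (hω₀.prodMk (measurable_pi_lambda _ fun i =>
      (hγ_meas (σ i)).comp (hv i)))
  have key : ∀ σ : Equiv.Perm (Fin N),
      ∫⁻ ω, ENNReal.ofReal (c (ω₀ ω) (fun i => γ (σ i) (v i ω))) ∂P
        = ∫⁻ ω, ENNReal.ofReal (c (ω₀ ω) (fun i => γ i (v i ω))) ∂P := by
    intro σ
    have h1 : ∫⁻ ω, ENNReal.ofReal (c (ω₀ ω) (fun i => γ (σ i) (v i ω))) ∂P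
        = ∫⁻ ω, ENNReal.ofReal (c (ω₀ ω) (fun i => γ i (v (σ⁻¹ i) ω))) ∂P := by
      refine lintegral_congr_ae ?_
      filter_upwards [hexch σ⁻¹] with ω hω
      have h := hω (fun i => γ (σ i) (v i ω)) (fun i => hγ_U (σ i) _)
      rw [h]
      simp
    rw [h1]
    have hf₁ : Measurable fun ω => (ω₀ ω, fun i => v (σ⁻¹ i) ω) :=
      hω₀.prodMk (measurable_pi_lambda _ fun i => hv (σ⁻¹ i))
    have hf₂ : Measurable fun ω => (ω₀ ω, fun i => v i ω) :=
      hω₀.prodMk (measurable_pi_lambda _ fun i => hv i)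
    calc ∫⁻ ω, ENNReal.ofReal (c (ω₀ ω) (fun i => γ i (v (σ⁻¹ i) ω))) ∂P
        = ∫⁻ ω, g ((fun ω => (ω₀ ω, fun i => v (σ⁻¹ i) ω)) ω) ∂P := rfl
      _ = ∫⁻ p, g p ∂(Measure.map (fun ω => (ω₀ ω, fun i => v (σ⁻¹ i) ω)) P) :=
          (lintegral_map hg hf₁).symm
      _ = ∫⁻ p, g p ∂(Measure.map (fun ω => (ω₀ ω, fun i => v i ω)) P) := by
          rw [hobs σ⁻¹]
      _ = ∫⁻ ω, g ((fun ω => (ω₀ ω, fun i => v i ω)) ω) ∂P := lintegral_map hg hf₂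
      _ = _ := rfl
  have hconv' : ∀ᵐ ω ∂P,
      ENNReal.ofReal (c (ω₀ ω) (fun i => (N : ℝ)⁻¹ • ∑ j : Fin N, γ j (v i ω)))
        ≤ ∑ k : Fin N, ENNReal.ofReal ((N : ℝ)⁻¹) *
            ENNReal.ofReal (c (ω₀ ω) (fun i => γ ((Equiv.addRight k) i) (v i ω))) := by
    filter_upwards [hconv] with ω hω
    have hpt : (fun i => (N : ℝ)⁻¹ • ∑ j : Fin N, γ j (v i ω))
        = ∑ k : Fin N, (N : ℝ)⁻¹ • (fun i => γ (i + k) (v i ω)) := by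
      funext i
      simp only [Finset.sum_apply, Pi.smul_apply]
      rw [← Finset.smul_sum]
      congr 1
      exact (Fintype.sum_equiv (Equiv.addLeft i)
        (fun k => γ (i + k) (v i ω)) (fun j => γ j (v i ω)) (fun k => rfl)).symm
    have hjensen := hω.map_sum_le (t := Finset.univ)
      (w := fun _ : Fin N => (N : ℝ)⁻¹)
      (p := fun k => (fun i => γ (i + k) (v i ω)))
      (fun k _ => by positivity)
      (by
        simp only [Finset.sum_const, Finset.card_univ, Fintype.card_fin, nsmul_eq_mul]
        field_simp)
      (fun k _ i => hγ_U _ _)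
    rw [hpt]
    calc ENNReal.ofReal (c (ω₀ ω) (∑ k : Fin N, (N : ℝ)⁻¹ • fun i => γ (i + k) (v i ω)))
        ≤ ENNReal.ofReal (∑ k : Fin N, (N : ℝ)⁻¹ * c (ω₀ ω) (fun i => γ (i + k) (v i ω))) :=
          ENNReal.ofReal_le_ofReal hjensen
      _ = ∑ k : Fin N, ENNReal.ofReal ((N : ℝ)⁻¹ * c (ω₀ ω) (fun i => γ (i + k) (v i ω))) :=
          ENNReal.ofReal_sum_of_nonneg (fun k _ => mul_nonneg (by positivity) (hc_nonneg _ _))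
      _ = _ := by
          refine Finset.sum_congr rfl (fun k _ => ?_)
          rw [ENNReal.ofReal_mul (by positivity)]
          rfl
  calc ∫⁻ ω, ENNReal.ofReal
        (c (ω₀ ω) (fun i => (N : ℝ)⁻¹ • ∑ j : Fin N, γ j (v i ω))) ∂P
      ≤ ∫⁻ ω, ∑ k : Fin N, ENNReal.ofReal ((N : ℝ)⁻¹) *
          ENNReal.ofReal (c (ω₀ ω) (fun i => γ ((Equiv.addRight k) i) (v i ω))) ∂P :=
        lintegral_mono_ae hconv'
    _ = ∑ k : Fin N, ∫⁻ ω, ENNReal.ofReal ((N : ℝ)⁻¹) *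
          ENNReal.ofReal (c (ω₀ ω) (fun i => γ ((Equiv.addRight k) i) (v i ω))) ∂P :=
        lintegral_finset_sum _ (fun k _ => (hmeasσ (Equiv.addRight k)).const_mul _)
    _ = ∑ k : Fin N, ENNReal.ofReal ((N : ℝ)⁻¹) *
          ∫⁻ ω, ENNReal.ofReal (c (ω₀ ω) (fun i => γ ((Equiv.addRight k) i) (v i ω))) ∂P := by
        refine Finset.sum_congr rfl (fun k _ => ?_)
        exact lintegral_const_mul _ (hmeasσ (Equiv.addRight k))
    _ = ∑ k : Fin N, ENNReal.ofReal ((N : ℝ)⁻¹) *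
          ∫⁻ ω, ENNReal.ofReal (c (ω₀ ω) (fun i => γ i (v i ω))) ∂P := by
        refine Finset.sum_congr rfl (fun k _ => ?_)
        rw [key (Equiv.addRight k)]
    _ = (N : ℝ≥0∞) * ((N : ℝ≥0∞)⁻¹ *
          ∫⁻ ω, ENNReal.ofReal (c (ω₀ ω) (fun i => γ i (v i ω))) ∂P) := by
        rw [Finset.sum_const, Finset.card_univ, Fintype.card_fin, nsmul_eq_mul]
        congr 2
        rw [ENNReal.ofReal_inv_of_pos (by exact_mod_cast hN), ENNReal.ofReal_natCast]
    _ = ∫⁻ ω, ENNReal.ofReal (c (ω₀ ω) (fun i => γ i (v i ω))) ∂P := by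
        rw [← mul_assoc, ENNReal.mul_inv_cancel (by exact_mod_cast hN.ne') (by simp), one_mul]
end

section
/- Fix N ∈ ℕ and consider the N-DM team with expected cost J_N(γ¹,…,γ^N) = E[c(ω₀, γ¹(v¹),…,γ^N(v^N))]. Assume: the cost c(ω₀, u¹,…,u^N) is ℙ-almost surely convex in (u¹,…,u^N); the action set U ⊆ ℝ^n is convex; and the team is exchangeable, i.e. for every N-tuple of policies (γ¹,…,γ^N) and every permutation σ of {1,…,N}, J_N(γ^{σ(1)},…,γ^{σ(N)}) = J_N(γ¹,…,γ^N). Then the team is symmetrically optimal: for every policy tuple (γ¹,…,γ^N) there exists a single policy γ̃ (one may take γ̃ = (1/N) Σ_{j=1}^N γ^j) such that J_N(γ̃,…,γ̃) ≤ J_N(γ¹,…,γ^N). -/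
open MeasureTheory Filter ENNReal

/-- The expected cost `J_N(γ¹,…,γ^N) = E[c(ω₀, γ¹(v¹),…,γ^N(v^N))]` of an `N`-tuple of
policies, valued in `ℝ≥0∞` (the cost `c` is `[0,∞)`-valued). -/
noncomputable def teamCostTuple {Ω Ω₀ : Type*} [MeasurableSpace Ω] [MeasurableSpace Ω₀]
    (P : Measure Ω) (ω₀ : Ω → Ω₀) {N m n : ℕ}
    (v : Fin N → Ω → (Fin m → ℝ))
    (c : Ω₀ → (Fin N → (Fin n → ℝ)) → ℝ)
    (γ : Fin N → (Fin m → ℝ) → (Fin n → ℝ)) : ℝ≥0∞ :=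
  ∫⁻ ω, ENNReal.ofReal (c (ω₀ ω) (fun i => γ i (v i ω))) ∂P

theorem stmt5 {Ω Ω₀ : Type*} [MeasurableSpace Ω] [MeasurableSpace Ω₀]
    (P : Measure Ω) [IsProbabilityMeasure P]
    (ω₀ : Ω → Ω₀) (hω₀ : Measurable ω₀)
    (N m n : ℕ) (hN : 0 < N)
    (v : Fin N → Ω → (Fin m → ℝ)) (hv : ∀ i, Measurable (v i))
    -- the action set `U` is convex
    (U : Set (Fin n → ℝ)) (hU : Convex ℝ U)
    (c : Ω₀ → (Fin N → (Fin n → ℝ)) → ℝ)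
    (hc_meas : Measurable (fun p : Ω₀ × (Fin N → (Fin n → ℝ)) => c p.1 p.2))
    (hc_nonneg : ∀ w u, 0 ≤ c w u)
    -- `c` is `ℙ`-a.s. convex in the actions
    (hconv : ∀ᵐ ω ∂P,
      ConvexOn ℝ {u : Fin N → (Fin n → ℝ) | ∀ i, u i ∈ U} (c (ω₀ ω)))
    -- the team is exchangeable: permuting the policies leaves `J_N` unchanged
    (hexch : ∀ δ : Fin N → (Fin m → ℝ) → (Fin n → ℝ),
      (∀ i, Measurable (δ i)) → (∀ i x, δ i x ∈ U) →
      ∀ σ : Equiv.Perm (Fin N),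
        teamCostTuple P ω₀ v c (fun i => δ (σ i)) = teamCostTuple P ω₀ v c δ)
    -- a given policy tuple, Borel measurable and `U`-valued
    (γ : Fin N → (Fin m → ℝ) → (Fin n → ℝ))
    (hγ_meas : ∀ i, Measurable (γ i)) (hγ_U : ∀ i x, γ i x ∈ U) :
    -- then there is a single policy (one may take `γ̃ = (1/N) Σ_j γ^j`)
    -- performing at least as well
    ∃ γt : (Fin m → ℝ) → (Fin n → ℝ), Measurable γt ∧ (∀ x, γt x ∈ U) ∧
      teamCostTuple P ω₀ v c (fun _ => γt) ≤ teamCostTuple P ω₀ v c γ := by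
  haveI : NeZero N := ⟨hN.ne'⟩
  have hNR : ((N : ℝ))⁻¹ ≠ 0 := by positivity
  -- the symmetric policy
  set γt : (Fin m → ℝ) → (Fin n → ℝ) := fun x => (N : ℝ)⁻¹ • ∑ j, γ j x with hγt
  have hγt_meas : Measurable γt := by
    have h1 : Measurable (fun x => ∑ j : Fin N, γ j x) :=
      Finset.measurable_sum Finset.univ (fun j _ => hγ_meas j)
    exact measurable_pi_lambda _ fun a =>
      ((measurable_pi_apply a).comp h1).const_smul _
  have hsum1 : ∑ _k : Fin N, (N : ℝ)⁻¹ = 1 := by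
    rw [Finset.sum_const, Finset.card_univ, Fintype.card_fin, nsmul_eq_mul,
      mul_inv_cancel₀ (by exact_mod_cast hN.ne')]
  have hγt_U : ∀ x, γt x ∈ U := by
    intro x
    have : γt x = ∑ j : Fin N, (N : ℝ)⁻¹ • γ j x := by
      simp only [hγt]
      rw [Finset.smul_sum]
    rw [this]
    exact hU.sum_mem (fun j _ => by positivity) hsum1 (fun j _ => hγ_U j x)
  refine ⟨γt, hγt_meas, hγt_U, ?_⟩
  -- measurability of the integrands
  have hmeas : ∀ δ : Fin N → (Fin m → ℝ) → (Fin n → ℝ), (∀ i, Measurable (δ i)) →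
      Measurable (fun ω => ENNReal.ofReal (c (ω₀ ω) (fun i => δ i (v i ω)))) := by
    intro δ hδ
    apply ENNReal.measurable_ofReal.comp
    exact hc_meas.comp (hω₀.prodMk
      (measurable_pi_lambda _ (fun i => (hδ i).comp (hv i))))
  -- the shifted policy tuples
  set p : Fin N → Ω → Fin N → (Fin n → ℝ) := fun k ω i => γ (i + k) (v i ω) with hp
  -- pointwise Jensen
  have key : ∀ᵐ ω ∂P, ENNReal.ofReal (c (ω₀ ω) (fun i => γt (v i ω))) ≤
      ∑ k : Fin N, ENNReal.ofReal ((N : ℝ)⁻¹) *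
        ENNReal.ofReal (c (ω₀ ω) (p k ω)) := by
    filter_upwards [hconv] with ω hω
    have hpt : (fun i => γt (v i ω)) = ∑ k : Fin N, (N : ℝ)⁻¹ • p k ω := by
      funext i
      simp only [Finset.sum_apply, Pi.smul_apply, hp, hγt]
      rw [Finset.smul_sum]
      exact (Equiv.sum_comp (Equiv.addLeft i)
        (fun j => (N : ℝ)⁻¹ • γ j (v i ω))).symm
    have hje : c (ω₀ ω) (fun i => γt (v i ω)) ≤
        ∑ k : Fin N, (N : ℝ)⁻¹ * c (ω₀ ω) (p k ω) := by
      rw [hpt]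
      exact hω.map_sum_le (fun k _ => by positivity) hsum1
        (fun k _ => fun i => hγ_U _ _)
    calc ENNReal.ofReal (c (ω₀ ω) (fun i => γt (v i ω)))
        ≤ ENNReal.ofReal (∑ k : Fin N, (N : ℝ)⁻¹ * c (ω₀ ω) (p k ω)) :=
          ENNReal.ofReal_le_ofReal hje
      _ = ∑ k : Fin N, ENNReal.ofReal ((N : ℝ)⁻¹ * c (ω₀ ω) (p k ω)) := by
          rw [ENNReal.ofReal_sum_of_nonneg]
          intro k _
          have := hc_nonneg (ω₀ ω) (p k ω)
          positivity
      _ = ∑ k : Fin N, ENNReal.ofReal ((N : ℝ)⁻¹) *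
            ENNReal.ofReal (c (ω₀ ω) (p k ω)) := by
          refine Finset.sum_congr rfl (fun k _ => ?_)
          exact ENNReal.ofReal_mul (by positivity)
  -- integrate
  have hshift : ∀ k : Fin N,
      (∫⁻ ω, ENNReal.ofReal (c (ω₀ ω) (p k ω)) ∂P) = teamCostTuple P ω₀ v c γ := by
    intro k
    exact hexch γ hγ_meas hγ_U (Equiv.addRight k)
  calc teamCostTuple P ω₀ v c (fun _ => γt)
      ≤ ∫⁻ ω, ∑ k : Fin N, ENNReal.ofReal ((N : ℝ)⁻¹) *
          ENNReal.ofReal (c (ω₀ ω) (p k ω)) ∂P := lintegral_mono_ae key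
    _ = ∑ k : Fin N, ENNReal.ofReal ((N : ℝ)⁻¹) *
          ∫⁻ ω, ENNReal.ofReal (c (ω₀ ω) (p k ω)) ∂P := by
        rw [lintegral_finset_sum]
        · exact Finset.sum_congr rfl (fun k _ => lintegral_const_mul _
            (hmeas (fun i => γ (i + k)) (fun i => hγ_meas _)))
        · intro k _
          exact (measurable_const.mul (hmeas (fun i => γ (i + k)) (fun i => hγ_meas _)))
    _ = ∑ _k : Fin N, ENNReal.ofReal ((N : ℝ)⁻¹) * teamCostTuple P ω₀ v c γ := by
        exact Finset.sum_congr rfl (fun k _ => by rw [hshift k])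
    _ = teamCostTuple P ω₀ v c γ := by
        rw [Finset.sum_const, Finset.card_univ, Fintype.card_fin, nsmul_eq_mul,
          ← mul_assoc, ENNReal.ofReal_inv_of_pos (by exact_mod_cast hN),
          ENNReal.ofReal_natCast, ENNReal.mul_inv_cancel (by exact_mod_cast hN.ne')
            (ENNReal.natCast_ne_top N), one_mul]
end

section
/- Let (x^i)_{i∈ℕ} and (z^i)_{i∈ℕ} be mutually independent families of i.i.d. real random variables with mean zero and finite positive variance (not necessarily Gaussian), and set v^i = x^i + z^i. Let R > 0 and Q ≥ 0 and define, for a sequence of Borel measurable policies γ = (γ^i : ℝ → ℝ)_{i∈ℕ}, J(γ) = limsup_{N→∞} (1/N) E[ Σ_{i=1}^N R·γ^i(v^i)² + Q·(γ^i(v^i) − x^i − (1/N)Σ_{k=1}^N x^k)² ]. Let φ : ℝ → ℝ be a Borel measurable function with φ(v¹) = E[x¹ | v¹] ℙ-a.s. Then the identical policy γ*(v) = (Q/(R+Q))·φ(v) is globally team optimal: J(γ*, γ*, …) = inf over all policy sequences γ of J(γ). -/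
/-!
Write `v = x¹ + z¹`, `s = E[(x¹)²]` and `Φ = E[φ(v)²]`. For a square-integrable policy `u = γⁱ(vⁱ)`
of agent `i` among `N`, expanding the square gives the stage cost
`(R+Q) E[u²] - 2Q(1 + 1/N) E[u xⁱ] + Q(1 + 3/N) s`: the other agents' `xᵏ` are centred and
independent of `vⁱ`, and all pairs `(xⁱ, zⁱ)` have the law of `(x¹, z¹)`. By the tower property
`E[u x¹] = E[u φ(v)]`, so completing the square bounds every stage below by
`Q(1 + 3/N) s - Q²(1 + 1/N)² Φ/(R+Q)` (a policy with `E[u²] = ∞` costs `∞`), while `γ*` attains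
`Q(1 + 3/N) s - Q²(1 + 2/N) Φ/(R+Q)`. Both tend to `Q s - Q² Φ/(R+Q)`.
-/

open MeasureTheory Filter ENNReal NNReal ProbabilityTheory

/-- The `N`-decision-maker expected cost
`J_N(γ) = (1/N) E[ Σ_{i<N} R γ^i(v^i)² + Q (γ^i(v^i) − x^i − (1/N) Σ_{k<N} x^k)² ]`
with observations `v^i = x^i + z^i`, valued in `ℝ≥0∞`. -/
noncomputable def lqCostN {Ω : Type*} [MeasurableSpace Ω] (P : Measure Ω)
    (x z : ℕ → Ω → ℝ) (R Q : ℝ) (γ : ℕ → ℝ → ℝ) (N : ℕ) : ℝ≥0∞ :=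
  (N : ℝ≥0∞)⁻¹ * ∫⁻ ω, ENNReal.ofReal (∑ i ∈ Finset.range N,
    (R * (γ i (x i ω + z i ω)) ^ 2 +
      Q * (γ i (x i ω + z i ω) - x i ω - (N : ℝ)⁻¹ * ∑ k ∈ Finset.range N, x k ω) ^ 2)) ∂P

/-- The infinite-team cost `J(γ) = limsup_{N→∞} J_N(γ)`. -/
noncomputable def lqCost {Ω : Type*} [MeasurableSpace Ω] (P : Measure Ω)
    (x z : ℕ → Ω → ℝ) (R Q : ℝ) (γ : ℕ → ℝ → ℝ) : ℝ≥0∞ :=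
  Filter.limsup (lqCostN P x z R Q γ) Filter.atTop

open Topology

noncomputable def sampleMean {Ω : Type*} (x : ℕ → Ω → ℝ) (N : ℕ) (ω : Ω) : ℝ :=
  (N : ℝ)⁻¹ * ∑ k ∈ Finset.range N, x k ω

theorem limsup_eq_iInf_limsup_of_tendsto {ι α β : Type*} [CompleteLinearOrder β]
    [TopologicalSpace β] [OrderTopology β] {l : Filter ι} [l.NeBot] {F : α → ι → β}
    {ℓ : ι → β} {b : β} (a₀ : α) (h₀ : Tendsto (F a₀) l (𝓝 b)) (hℓ : Tendsto ℓ l (𝓝 b))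
    (hle : ∀ a, ∀ᶠ N in l, ℓ N ≤ F a N) :
    limsup (F a₀) l = ⨅ a, limsup (F a) l := by
  refine le_antisymm (le_iInf fun a => ?_) (iInf_le _ a₀)
  calc limsup (F a₀) l = liminf ℓ l := h₀.limsup_eq.trans hℓ.liminf_eq.symm
    _ ≤ liminf (F a) l := liminf_le_liminf (hle a)
    _ ≤ limsup (F a) l := liminf_le_limsup

theorem tendsto_ofReal_comp_inv_natCast {f : ℝ → ℝ} (hf : Continuous f) :
    Tendsto (fun N : ℕ => ENNReal.ofReal (f (N : ℝ)⁻¹)) atTop (𝓝 (.ofReal (f 0))) :=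
  ENNReal.tendsto_ofReal ((hf.tendsto 0).comp tendsto_inv_atTop_nhds_zero_nat)

section Integrals

variable {Ω : Type*} {mΩ : MeasurableSpace Ω} {P : Measure Ω}

theorem integral_condExp_mul_of_stronglyMeasurable {m : MeasurableSpace Ω} (hm : m ≤ mΩ)
    [SigmaFinite (P.trim hm)] {f g : Ω → ℝ} (hf : StronglyMeasurable[m] f)
    (hgf : Integrable (g * f) P) (hg : Integrable g P) :
    ∫ ω, P[g|m] ω * f ω ∂P = ∫ ω, g ω * f ω ∂P :=
  calc ∫ ω, P[g|m] ω * f ω ∂P = ∫ ω, P[g * f|m] ω ∂P :=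
        integral_congr_ae (condExp_mul_of_stronglyMeasurable_right hf hgf hg).symm
    _ = ∫ ω, g ω * f ω ∂P := integral_condExp hm

theorem integral_mul_comp_eq_of_condExp [IsFiniteMeasure P] {X v : Ω → ℝ} {φ g : ℝ → ℝ}
    (hv : Measurable v) (hX : MemLp X 2 P)
    (hφ : (fun ω => φ (v ω)) =ᵐ[P] P[X|MeasurableSpace.comap v Real.measurableSpace])
    (hg : Measurable g) (hg2 : MemLp (fun ω => g (v ω)) 2 P) :
    ∫ ω, X ω * g (v ω) ∂P = ∫ ω, φ (v ω) * g (v ω) ∂P := by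
  have hgv : StronglyMeasurable[MeasurableSpace.comap v Real.measurableSpace]
      fun ω => g (v ω) := (hg.comp (comap_measurable v)).stronglyMeasurable
  rw [← integral_condExp_mul_of_stronglyMeasurable hv.comap_le hgv (hX.integrable_mul hg2)
    (hX.integrable one_le_two)]
  exact integral_congr_ae (hφ.symm.mul .rfl)

theorem neg_sq_div_mul_integral_sq_le {u w : Ω → ℝ} (hu : MemLp u 2 P) (hw : MemLp w 2 P)
    {a : ℝ} (ha : 0 < a) (b : ℝ) :
    -(b ^ 2 / a) * ∫ ω, w ω ^ 2 ∂P ≤ a * ∫ ω, u ω ^ 2 ∂P - 2 * b * ∫ ω, w ω * u ω ∂P := by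
  have hu2 := hu.integrable_sq
  have hw2 := hw.integrable_sq
  have hwu : Integrable (fun ω => w ω * u ω) P := hw.integrable_mul hu
  have hexpand : ∀ ω, (a * u ω - b * w ω) ^ 2
      = a ^ 2 * u ω ^ 2 - 2 * a * b * (w ω * u ω) + b ^ 2 * w ω ^ 2 := fun ω => by ring
  have hsq : 0 ≤ ∫ ω, (a * u ω - b * w ω) ^ 2 ∂P := integral_nonneg fun ω => sq_nonneg _
  simp_rw [hexpand] at hsq
  rw [integral_add (by fun_prop) (by fun_prop), integral_sub (by fun_prop) (by fun_prop)] at hsq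
  simp only [integral_const_mul] at hsq
  rw [neg_mul, div_mul_eq_mul_div, neg_le_iff_add_nonneg, ← sub_nonneg]
  have : 0 ≤ (a ^ 2 * ∫ ω, u ω ^ 2 ∂P - 2 * a * b * ∫ ω, w ω * u ω ∂P
      + b ^ 2 * ∫ ω, w ω ^ 2 ∂P) / a := div_nonneg hsq ha.le
  convert this using 1
  field_simp
  ring

variable {x : ℕ → Ω → ℝ} {u : Ω → ℝ} {i N : ℕ}

theorem memLp_sampleMean {p : ℝ≥0∞} (hx : ∀ k, MemLp (x k) p P) (N : ℕ) :
    MemLp (sampleMean x N) p P :=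
  (memLp_finsetSum _ fun k _ => hx k).const_mul _

theorem integrable_sampleMean_mul (h : ∀ k, Integrable (fun ω => x k ω * u ω) P) :
    Integrable (fun ω => sampleMean x N ω * u ω) P := by
  simp only [sampleMean, mul_assoc, Finset.sum_mul]
  exact (integrable_finsetSum _ fun k _ => h k).const_mul _

theorem integral_sampleMean_mul (h : ∀ k, Integrable (fun ω => x k ω * u ω) P) :
    ∫ ω, sampleMean x N ω * u ω ∂P = (N : ℝ)⁻¹ * ∑ k ∈ Finset.range N, ∫ ω, x k ω * u ω ∂P := by
  simp only [sampleMean, mul_assoc, Finset.sum_mul]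
  rw [integral_const_mul, integral_finsetSum _ fun k _ => h k]

theorem integral_sampleMean_mul_of_orthogonal (h : ∀ k, Integrable (fun ω => x k ω * u ω) P)
    (horth : ∀ k, k ≠ i → ∫ ω, x k ω * u ω ∂P = 0) (hi : i < N) :
    ∫ ω, sampleMean x N ω * u ω ∂P = (N : ℝ)⁻¹ * ∫ ω, x i ω * u ω ∂P := by
  rw [integral_sampleMean_mul h,
    Finset.sum_eq_single_of_mem i (Finset.mem_range.2 hi) fun k _ hk => horth k hk]

theorem integral_sampleMean_mul_self {s : ℝ} (hN : N ≠ 0) (hx : ∀ k, MemLp (x k) 2 P)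
    (hxx : ∀ j k, j ≠ k → ∫ ω, x j ω * x k ω ∂P = 0) (hs : ∀ k, ∫ ω, x k ω ^ 2 ∂P = s) :
    ∫ ω, sampleMean x N ω * sampleMean x N ω ∂P = (N : ℝ)⁻¹ * s := by
  have hint : ∀ j k, Integrable (fun ω => x j ω * x k ω) P :=
    fun j k => (hx j).integrable_mul (hx k)
  have hxm : ∀ k, Integrable (fun ω => x k ω * sampleMean x N ω) P := fun k => by
    simp_rw [mul_comm (x k _)]
    exact integrable_sampleMean_mul fun j => hint j k
  have hxm_eq : ∀ k < N, ∫ ω, x k ω * sampleMean x N ω ∂P = (N : ℝ)⁻¹ * s := fun k hk => by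
    simp_rw [mul_comm (x k _)]
    rw [integral_sampleMean_mul_of_orthogonal (fun j => hint j k) (fun j hj => hxx j k hj) hk,
      ← hs k]
    simp_rw [sq]
  rw [integral_sampleMean_mul hxm,
    Finset.sum_congr rfl fun k hk => hxm_eq k (Finset.mem_range.1 hk), Finset.sum_const,
    Finset.card_range, nsmul_eq_mul]
  field_simp

noncomputable def stageCost (R Q : ℝ) (x : ℕ → Ω → ℝ) (N i : ℕ) (u : Ω → ℝ) (ω : Ω) : ℝ :=
  R * u ω ^ 2 + Q * (u ω - x i ω - sampleMean x N ω) ^ 2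

theorem stageCost_nonneg {R Q : ℝ} (hR : 0 ≤ R) (hQ : 0 ≤ Q) (ω : Ω) :
    0 ≤ stageCost R Q x N i u ω := by
  unfold stageCost
  positivity

theorem integral_stageCost {s : ℝ} (R Q : ℝ) (hu : MemLp u 2 P) (hx : ∀ k, MemLp (x k) 2 P)
    (hxx : ∀ j k, j ≠ k → ∫ ω, x j ω * x k ω ∂P = 0) (hs : ∀ k, ∫ ω, x k ω ^ 2 ∂P = s)
    (hxu : ∀ k, k ≠ i → ∫ ω, x k ω * u ω ∂P = 0) (hi : i < N) :
    ∫ ω, stageCost R Q x N i u ω ∂P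
      = (R + Q) * ∫ ω, u ω ^ 2 ∂P - 2 * Q * (1 + (N : ℝ)⁻¹) * ∫ ω, x i ω * u ω ∂P
        + Q * (1 + 3 * (N : ℝ)⁻¹) * s := by
  have hxu_int : ∀ k, Integrable (fun ω => x k ω * u ω) P := fun k => (hx k).integrable_mul hu
  have hxx_int : ∀ j k, Integrable (fun ω => x j ω * x k ω) P :=
    fun j k => (hx j).integrable_mul (hx k)
  have hu2 : Integrable (fun ω => u ω ^ 2) P := hu.integrable_sq
  have hxi2 : Integrable (fun ω => x i ω ^ 2) P := (hx i).integrable_sq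
  have hmu : Integrable (fun ω => sampleMean x N ω * u ω) P := integrable_sampleMean_mul hxu_int
  have hmx : Integrable (fun ω => sampleMean x N ω * x i ω) P :=
    integrable_sampleMean_mul fun k => hxx_int k i
  have hmm : Integrable (fun ω => sampleMean x N ω * sampleMean x N ω) P := by
    refine integrable_sampleMean_mul fun k => ?_
    simp_rw [mul_comm (x k _)]
    exact integrable_sampleMean_mul fun j => hxx_int j k
  have hexpand : ∀ ω, stageCost R Q x N i u ω
      = (R + Q) * u ω ^ 2 + Q * x i ω ^ 2 + Q * (sampleMean x N ω * sampleMean x N ω)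
        - 2 * Q * (x i ω * u ω) - 2 * Q * (sampleMean x N ω * u ω)
        + 2 * Q * (sampleMean x N ω * x i ω) := fun ω => by
    unfold stageCost
    ring
  simp_rw [hexpand]
  rw [integral_add (by fun_prop) (by fun_prop), integral_sub (by fun_prop) (by fun_prop),
    integral_sub (by fun_prop) (by fun_prop), integral_add (by fun_prop) (by fun_prop),
    integral_add (by fun_prop) (by fun_prop)]
  simp only [integral_const_mul]
  rw [integral_sampleMean_mul_self (by omega) hx hxx hs,
    integral_sampleMean_mul_of_orthogonal hxu_int hxu hi,
    integral_sampleMean_mul_of_orthogonal (fun k => hxx_int k i) (fun k hk => hxx k i hk) hi, hs]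
  simp_rw [← sq]
  rw [hs]
  ring

end Integrals

section Team

variable {Ω : Type*} {mΩ : MeasurableSpace Ω} {P : Measure Ω} {x z : ℕ → Ω → ℝ}

-- What the cost computation uses of the i.i.d., independence and centring hypotheses.
structure IsLQTeam (P : Measure Ω) (x z : ℕ → Ω → ℝ) : Prop where
  measurable_x : ∀ i, Measurable (x i)
  measurable_z : ∀ i, Measurable (z i)
  identDistrib : ∀ i, IdentDistrib (fun ω => (x i ω, z i ω)) (fun ω => (x 0 ω, z 0 ω)) P P
  memLp_two : MemLp (x 0) 2 P
  integral_mul_eq_zero : ∀ F : ℝ × ℝ → ℝ, Measurable F → ∀ j k, j ≠ k →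
    ∫ ω, x k ω * F (x j ω, z j ω) ∂P = 0

theorem IsLQTeam.of_iIndepFun [IsFiniteMeasure P] (hx : ∀ i, Measurable (x i))
    (hz : ∀ i, Measurable (z i)) (hx_ident : ∀ i, Measure.map (x i) P = Measure.map (x 0) P)
    (hz_ident : ∀ i, Measure.map (z i) P = Measure.map (z 0) P)
    (hindep : iIndepFun (Sum.elim x z) P) (hx_mean : ∫ ω, x 0 ω ∂P = 0)
    (hx_sq : Integrable (fun ω => x 0 ω ^ 2) P) :
    IsLQTeam P x z := by
  have hpair : ∀ i, IdentDistrib (fun ω => (x i ω, z i ω)) (fun ω => (x 0 ω, z 0 ω)) P P :=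
    fun i => .prodMk ⟨(hx i).aemeasurable, (hx 0).aemeasurable, hx_ident i⟩
      ⟨(hz i).aemeasurable, (hz 0).aemeasurable, hz_ident i⟩
      (hindep.indepFun (i := .inl i) (j := .inr i) Sum.inl_ne_inr)
      (hindep.indepFun (i := .inl 0) (j := .inr 0) Sum.inl_ne_inr)
  have hmeas : ∀ a, Measurable (Sum.elim x z a) := fun
    | .inl i => hx i
    | .inr i => hz i
  refine ⟨hx, hz, hpair, (memLp_two_iff_integrable_sq (hx 0).aestronglyMeasurable).2 hx_sq,
    fun F hF j k hjk => ?_⟩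
  have hind : IndepFun (fun ω => F (x j ω, z j ω)) (x k) P :=
    (hindep.indepFun_prodMk hmeas (.inl j) (.inr j) (.inl k) (by simpa using hjk)
      Sum.inr_ne_inl).comp hF measurable_id
  calc ∫ ω, x k ω * F (x j ω, z j ω) ∂P
      = (∫ ω, x k ω ∂P) * ∫ ω, F (x j ω, z j ω) ∂P :=
        hind.symm.integral_mul_eq_mul_integral (hx k).aestronglyMeasurable
          (hF.comp ((hx j).prodMk (hz j))).aestronglyMeasurable
    _ = 0 := by
      rw [show ∫ ω, x k ω ∂P = 0 from ((hpair k).comp measurable_fst).integral_eq.trans hx_mean,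
        zero_mul]

theorem lqCostN_eq_sum_lintegral_stageCost (hx : ∀ i, Measurable (x i))
    (hz : ∀ i, Measurable (z i)) {R Q : ℝ} (hR : 0 ≤ R) (hQ : 0 ≤ Q) {γ : ℕ → ℝ → ℝ}
    (hγ : ∀ i, Measurable (γ i)) (N : ℕ) :
    lqCostN P x z R Q γ N = (N : ℝ≥0∞)⁻¹ * ∑ i ∈ Finset.range N,
      ∫⁻ ω, .ofReal (stageCost R Q x N i (fun ω => γ i (x i ω + z i ω)) ω) ∂P := by
  have hmeas : ∀ i, Measurable (stageCost R Q x N i fun ω => γ i (x i ω + z i ω)) := fun i => by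
    unfold stageCost sampleMean
    fun_prop
  rw [← lintegral_finsetSum _ fun i _ => (hmeas i).ennreal_ofReal]
  simp_rw [← ENNReal.ofReal_sum_of_nonneg fun i _ => stageCost_nonneg hR hQ _]
  rfl

namespace IsLQTeam

variable {R Q : ℝ} {g φ : ℝ → ℝ} {i N : ℕ}

theorem integral_comp_eq (h : IsLQTeam P x z) {F : ℝ × ℝ → ℝ} (hF : Measurable F) (i : ℕ) :
    ∫ ω, F (x i ω, z i ω) ∂P = ∫ ω, F (x 0 ω, z 0 ω) ∂P :=
  ((h.identDistrib i).comp hF).integral_eq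

theorem memLp_comp_iff (h : IsLQTeam P x z) {F : ℝ × ℝ → ℝ} (hF : Measurable F) (i : ℕ) :
    MemLp (fun ω => F (x i ω, z i ω)) 2 P ↔ MemLp (fun ω => F (x 0 ω, z 0 ω)) 2 P :=
  ((h.identDistrib i).comp hF).memLp_iff

theorem lintegral_stageCost_eq (h : IsLQTeam P x z) (hR : 0 ≤ R) (hQ : 0 ≤ Q)
    (hg : Measurable g) (hg2 : MemLp (fun ω => g (x 0 ω + z 0 ω)) 2 P) (hi : i < N) :
    ∫⁻ ω, .ofReal (stageCost R Q x N i (fun ω => g (x i ω + z i ω)) ω) ∂P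
      = .ofReal ((R + Q) * ∫ ω, g (x 0 ω + z 0 ω) ^ 2 ∂P
        - 2 * Q * (1 + (N : ℝ)⁻¹) * ∫ ω, x 0 ω * g (x 0 ω + z 0 ω) ∂P
        + Q * (1 + 3 * (N : ℝ)⁻¹) * ∫ ω, x 0 ω ^ 2 ∂P) := by
  have hx : ∀ k, MemLp (x k) 2 P := fun k =>
    (h.memLp_comp_iff (F := Prod.fst) measurable_fst k).2 h.memLp_two
  have hu : MemLp (fun ω => g (x i ω + z i ω)) 2 P :=
    (h.memLp_comp_iff (F := fun p => g (p.1 + p.2)) (by fun_prop) i).2 hg2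
  have hint : Integrable (stageCost R Q x N i fun ω => g (x i ω + z i ω)) P :=
    (hu.integrable_sq.const_mul R).add
      (((hu.sub (hx i)).sub (memLp_sampleMean hx N)).integrable_sq.const_mul Q)
  rw [← ofReal_integral_eq_lintegral_ofReal hint (ae_of_all _ (stageCost_nonneg hR hQ)),
    integral_stageCost R Q hu hx
      (fun j k hjk => h.integral_mul_eq_zero _ measurable_fst k j hjk.symm)
      (h.integral_comp_eq (F := fun p => p.1 ^ 2) (by fun_prop))
      (fun k hk => h.integral_mul_eq_zero (fun p => g (p.1 + p.2)) (by fun_prop) i k hk.symm) hi,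
    h.integral_comp_eq (F := fun p => g (p.1 + p.2) ^ 2) (by fun_prop) i,
    h.integral_comp_eq (F := fun p => p.1 * g (p.1 + p.2)) (by fun_prop) i]

theorem lintegral_stageCost_eq_top (h : IsLQTeam P x z) (hR : 0 < R) (hQ : 0 ≤ Q)
    (hg : Measurable g) (hg2 : ¬MemLp (fun ω => g (x 0 ω + z 0 ω)) 2 P) :
    ∫⁻ ω, .ofReal (stageCost R Q x N i (fun ω => g (x i ω + z i ω)) ω) ∂P = ⊤ := by
  have hgi : Measurable fun ω => g (x i ω + z i ω) :=
    hg.comp ((h.measurable_x i).add (h.measurable_z i))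
  have hnot : ¬Integrable (fun ω => R * g (x i ω + z i ω) ^ 2) P := fun hint =>
    hg2 <| (h.memLp_comp_iff (F := fun p => g (p.1 + p.2)) (by fun_prop) i).1 <|
      (memLp_two_iff_integrable_sq hgi.aestronglyMeasurable).2 <|
        (integrable_const_mul_iff (isUnit_iff_ne_zero.2 hR.ne') _).1 hint
  have htop : ∫⁻ ω, .ofReal (R * g (x i ω + z i ω) ^ 2) ∂P = ⊤ := by
    by_contra hne
    exact hnot ((lintegral_ofReal_ne_top_iff_integrable
      ((hgi.pow_const 2).const_mul R).aestronglyMeasurable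
      (ae_of_all _ fun ω => by positivity)).1 hne)
  refine top_le_iff.1 (htop ▸ lintegral_mono fun ω => ENNReal.ofReal_le_ofReal ?_)
  exact le_add_of_nonneg_right (by positivity)

theorem memLp_two_condExp [IsFiniteMeasure P] (h : IsLQTeam P x z)
    (hφ : (fun ω => φ (x 0 ω + z 0 ω)) =ᵐ[P]
      P[x 0|MeasurableSpace.comap (fun ω => x 0 ω + z 0 ω) Real.measurableSpace]) :
    MemLp (fun ω => φ (x 0 ω + z 0 ω)) 2 P :=
  (h.memLp_two.condExp one_le_two).ae_eq hφ.symm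

theorem ofReal_le_lintegral_stageCost [IsFiniteMeasure P] (h : IsLQTeam P x z)
    (hφ : (fun ω => φ (x 0 ω + z 0 ω)) =ᵐ[P]
      P[x 0|MeasurableSpace.comap (fun ω => x 0 ω + z 0 ω) Real.measurableSpace])
    (hR : 0 < R) (hQ : 0 ≤ Q) (hg : Measurable g) (hi : i < N) :
    .ofReal (Q * (1 + 3 * (N : ℝ)⁻¹) * ∫ ω, x 0 ω ^ 2 ∂P
        - (Q * (1 + (N : ℝ)⁻¹)) ^ 2 / (R + Q) * ∫ ω, φ (x 0 ω + z 0 ω) ^ 2 ∂P)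
      ≤ ∫⁻ ω, .ofReal (stageCost R Q x N i (fun ω => g (x i ω + z i ω)) ω) ∂P := by
  by_cases hg2 : MemLp (fun ω => g (x 0 ω + z 0 ω)) 2 P
  · have hv : Measurable fun ω => x 0 ω + z 0 ω := (h.measurable_x 0).add (h.measurable_z 0)
    rw [h.lintegral_stageCost_eq hR.le hQ hg hg2 hi,
      integral_mul_comp_eq_of_condExp hv h.memLp_two hφ hg hg2]
    have := neg_sq_div_mul_integral_sq_le hg2 (h.memLp_two_condExp hφ) (by linarith : 0 < R + Q)
      (Q * (1 + (N : ℝ)⁻¹))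
    gcongr
    linarith
  · rw [h.lintegral_stageCost_eq_top hR hQ hg hg2]
    exact le_top

theorem lintegral_stageCost_const_mul_eq [IsFiniteMeasure P] (h : IsLQTeam P x z)
    (hφ_meas : Measurable φ)
    (hφ : (fun ω => φ (x 0 ω + z 0 ω)) =ᵐ[P]
      P[x 0|MeasurableSpace.comap (fun ω => x 0 ω + z 0 ω) Real.measurableSpace])
    (hR : 0 ≤ R) (hQ : 0 ≤ Q) (κ : ℝ) (hi : i < N) :
    ∫⁻ ω, .ofReal (stageCost R Q x N i (fun ω => κ * φ (x i ω + z i ω)) ω) ∂P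
      = .ofReal (((R + Q) * κ ^ 2 - 2 * Q * (1 + (N : ℝ)⁻¹) * κ) * ∫ ω, φ (x 0 ω + z 0 ω) ^ 2 ∂P
        + Q * (1 + 3 * (N : ℝ)⁻¹) * ∫ ω, x 0 ω ^ 2 ∂P) := by
  have hv : Measurable fun ω => x 0 ω + z 0 ω := (h.measurable_x 0).add (h.measurable_z 0)
  have hφ2 := h.memLp_two_condExp hφ
  rw [h.lintegral_stageCost_eq (g := fun v => κ * φ v) hR hQ (hφ_meas.const_mul κ)
    (hφ2.const_mul κ) hi]
  simp_rw [mul_pow, mul_left_comm _ κ]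
  rw [integral_const_mul, integral_const_mul,
    integral_mul_comp_eq_of_condExp hv h.memLp_two hφ hφ_meas hφ2]
  simp_rw [← sq]
  ring_nf

theorem ofReal_le_lqCostN [IsFiniteMeasure P] (h : IsLQTeam P x z)
    (hφ : (fun ω => φ (x 0 ω + z 0 ω)) =ᵐ[P]
      P[x 0|MeasurableSpace.comap (fun ω => x 0 ω + z 0 ω) Real.measurableSpace])
    (hR : 0 < R) (hQ : 0 ≤ Q) {γ : ℕ → ℝ → ℝ} (hγ : ∀ i, Measurable (γ i)) (hN : N ≠ 0) :
    .ofReal (Q * (1 + 3 * (N : ℝ)⁻¹) * ∫ ω, x 0 ω ^ 2 ∂P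
        - (Q * (1 + (N : ℝ)⁻¹)) ^ 2 / (R + Q) * ∫ ω, φ (x 0 ω + z 0 ω) ^ 2 ∂P)
      ≤ lqCostN P x z R Q γ N := by
  rw [lqCostN_eq_sum_lintegral_stageCost h.measurable_x h.measurable_z hR.le hQ hγ]
  refine le_of_eq_of_le (ENNReal.inv_mul_cancel_left (Nat.cast_ne_zero.2 hN)
    (ENNReal.natCast_ne_top N)).symm (mul_le_mul_right ?_ _)
  simpa using Finset.card_nsmul_le_sum (Finset.range N) _ _ fun i hi =>
    h.ofReal_le_lintegral_stageCost hφ hR hQ (hγ i) (Finset.mem_range.1 hi)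

theorem lqCostN_const_mul_eq [IsFiniteMeasure P] (h : IsLQTeam P x z)
    (hφ_meas : Measurable φ)
    (hφ : (fun ω => φ (x 0 ω + z 0 ω)) =ᵐ[P]
      P[x 0|MeasurableSpace.comap (fun ω => x 0 ω + z 0 ω) Real.measurableSpace])
    (hR : 0 ≤ R) (hQ : 0 ≤ Q) (κ : ℝ) (hN : N ≠ 0) :
    lqCostN P x z R Q (fun _ v => κ * φ v) N
      = .ofReal (((R + Q) * κ ^ 2 - 2 * Q * (1 + (N : ℝ)⁻¹) * κ) * ∫ ω, φ (x 0 ω + z 0 ω) ^ 2 ∂P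
        + Q * (1 + 3 * (N : ℝ)⁻¹) * ∫ ω, x 0 ω ^ 2 ∂P) := by
  rw [lqCostN_eq_sum_lintegral_stageCost h.measurable_x h.measurable_z hR hQ
      fun _ => hφ_meas.const_mul κ,
    Finset.sum_congr rfl fun i hi =>
      h.lintegral_stageCost_const_mul_eq hφ_meas hφ hR hQ κ (Finset.mem_range.1 hi),
    Finset.sum_const, Finset.card_range, nsmul_eq_mul,
    ENNReal.inv_mul_cancel_left (Nat.cast_ne_zero.2 hN) (ENNReal.natCast_ne_top N)]

end IsLQTeam

end Team

theorem stmt14_general {Ω : Type*} [MeasurableSpace Ω] (P : Measure Ω) [IsProbabilityMeasure P]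
    (x z : ℕ → Ω → ℝ)
    (hx_meas : ∀ i, Measurable (x i)) (hz_meas : ∀ i, Measurable (z i))
    -- `(x^i)` and `(z^i)` are i.i.d. families, mutually independent
    (hx_ident : ∀ i, Measure.map (x i) P = Measure.map (x 0) P)
    (hz_ident : ∀ i, Measure.map (z i) P = Measure.map (z 0) P)
    (hindep : iIndepFun (Sum.elim x z) P)
    -- mean zero, finite positive variance
    (hx_mean : ∫ ω, x 0 ω ∂P = 0)
    (hx_sq : Integrable (fun ω => (x 0 ω) ^ 2) P)
    (R Q : ℝ) (hR : 0 < R) (hQ : 0 ≤ Q)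
    -- `φ` is a Borel version of the conditional expectation `E[x¹ | v¹]`
    (φ : ℝ → ℝ) (hφ_meas : Measurable φ)
    (hφ : (fun ω => φ (x 0 ω + z 0 ω)) =ᵐ[P]
      P[x 0|MeasurableSpace.comap (fun ω => x 0 ω + z 0 ω) Real.measurableSpace]) :
    -- then the identical policy `γ*(v) = (Q/(R+Q))·φ(v)` is globally team optimal
    lqCost P x z R Q (fun _ => fun vv => (Q / (R + Q)) * φ vv) =
      ⨅ γ : {γ : ℕ → ℝ → ℝ // ∀ i, Measurable (γ i)}, lqCost P x z R Q γ.1 := by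
  have h := IsLQTeam.of_iIndepFun hx_meas hz_meas hx_ident hz_ident hindep hx_mean hx_sq
  set s := ∫ ω, x 0 ω ^ 2 ∂P
  set Φ := ∫ ω, φ (x 0 ω + z 0 ω) ^ 2 ∂P
  have hbound : Tendsto (fun N : ℕ => ENNReal.ofReal
      (Q * (1 + 3 * (N : ℝ)⁻¹) * s - (Q * (1 + (N : ℝ)⁻¹)) ^ 2 / (R + Q) * Φ)) atTop
      (𝓝 (.ofReal (Q * s - Q ^ 2 / (R + Q) * Φ))) := by
    simpa using tendsto_ofReal_comp_inv_natCast
      (f := fun t => Q * (1 + 3 * t) * s - (Q * (1 + t)) ^ 2 / (R + Q) * Φ) (by fun_prop)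
  have hoptimal : Tendsto (lqCostN P x z R Q fun _ v => Q / (R + Q) * φ v) atTop
      (𝓝 (.ofReal (Q * s - Q ^ 2 / (R + Q) * Φ))) := by
    have hRQ : R + Q ≠ 0 := by linarith
    convert (tendsto_ofReal_comp_inv_natCast (f := fun t =>
        ((R + Q) * (Q / (R + Q)) ^ 2 - 2 * Q * (1 + t) * (Q / (R + Q))) * Φ + Q * (1 + 3 * t) * s)
      (by fun_prop)).congr' ((eventually_ne_atTop 0).mono fun N hN =>
        (h.lqCostN_const_mul_eq hφ_meas hφ hR.le hQ _ hN).symm) using 3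
    field_simp
    ring
  exact limsup_eq_iInf_limsup_of_tendsto
    (F := fun γ : {γ : ℕ → ℝ → ℝ // ∀ i, Measurable (γ i)} => lqCostN P x z R Q γ.1)
    ⟨fun _ v => Q / (R + Q) * φ v, fun _ => hφ_meas.const_mul _⟩ hoptimal hbound
    fun γ => (eventually_ne_atTop 0).mono fun N hN => h.ofReal_le_lqCostN hφ hR hQ γ.2 hN

theorem stmt14 {Ω : Type*} [MeasurableSpace Ω] (P : Measure Ω) [IsProbabilityMeasure P]
    (x z : ℕ → Ω → ℝ)
    (hx_meas : ∀ i, Measurable (x i)) (hz_meas : ∀ i, Measurable (z i))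
    -- `(x^i)` and `(z^i)` are i.i.d. families, mutually independent
    (hx_ident : ∀ i, Measure.map (x i) P = Measure.map (x 0) P)
    (hz_ident : ∀ i, Measure.map (z i) P = Measure.map (z 0) P)
    (hindep : iIndepFun (Sum.elim x z) P)
    -- mean zero, finite positive variance
    (hx_int : Integrable (x 0) P) (hz_int : Integrable (z 0) P)
    (hx_mean : ∫ ω, x 0 ω ∂P = 0) (hz_mean : ∫ ω, z 0 ω ∂P = 0)
    (hx_sq : Integrable (fun ω => (x 0 ω) ^ 2) P)
    (hz_sq : Integrable (fun ω => (z 0 ω) ^ 2) P)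
    (hx_var : 0 < ∫ ω, (x 0 ω) ^ 2 ∂P) (hz_var : 0 < ∫ ω, (z 0 ω) ^ 2 ∂P)
    (R Q : ℝ) (hR : 0 < R) (hQ : 0 ≤ Q)
    -- `φ` is a Borel version of the conditional expectation `E[x¹ | v¹]`
    (φ : ℝ → ℝ) (hφ_meas : Measurable φ)
    (hφ : (fun ω => φ (x 0 ω + z 0 ω)) =ᵐ[P]
      P[x 0|MeasurableSpace.comap (fun ω => x 0 ω + z 0 ω) Real.measurableSpace]) :
    -- then the identical policy `γ*(v) = (Q/(R+Q))·φ(v)` is globally team optimal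
    lqCost P x z R Q (fun _ => fun vv => (Q / (R + Q)) * φ vv) =
      ⨅ γ : {γ : ℕ → ℝ → ℝ // ∀ i, Measurable (γ i)}, lqCost P x z R Q γ.1 :=
  stmt14_general P x z hx_meas hz_meas hx_ident hz_ident hindep hx_mean hx_sq R Q hR hQ φ hφ_meas hφ
end

section
/- Let (v^i)_{i∈ℕ} be i.i.d. random vectors in ℝ^m on a probability space (Ω, 𝓕, ℙ), and let γ_N, γ : ℝ^m → ℝ^n be Borel measurable maps such that γ_N converges to γ pointwise as N → ∞. Then for every bounded continuous function g : ℝ^n × ℝ^m → ℝ, the empirical averages (1/N) Σ_{i=1}^N g(γ_N(v^i), v^i) converge in probability to E[g(γ(v¹), v¹)] as N → ∞; equivalently, the empirical measures Q_N = (1/N) Σ_{i=1}^N δ_{(γ_N(v^i), v^i)} converge weakly in probability to the law of (γ(v¹), v¹). -/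
open MeasureTheory Filter ProbabilityTheory

/-!
Split the empirical average as
`(1/N) Σ (g(γ_N(vⁱ), vⁱ) - g(γ(vⁱ), vⁱ)) + (1/N) Σ g(γ(vⁱ), vⁱ)`.
The second term converges almost surely, hence in probability, by the strong law of large
numbers. Since the `vⁱ` are identically distributed, the `L¹` norm of the first term is at most
`E |g(γ_N(v⁰), v⁰) - g(γ(v⁰), v⁰)|`, which tends to `0` by dominated convergence; so the
first term tends to `0` in probability.
-/

namespace MeasureTheory

variable {α ι E : Type*} [MeasurableSpace α] {μ : Measure α}

theorem TendstoInMeasure.add [SeminormedAddCommGroup E] {l : Filter ι} {f g : ι → α → E}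
    {a b : α → E} (hf : TendstoInMeasure μ f l a) (hg : TendstoInMeasure μ g l b) :
    TendstoInMeasure μ (fun i x => f i x + g i x) l (fun x => a x + b x) := by
  intro ε hε
  have hsplit : ∀ i, μ {x | ε ≤ edist (f i x + g i x) (a x + b x)} ≤
      μ {x | ε / 2 ≤ edist (f i x) (a x)} + μ {x | ε / 2 ≤ edist (g i x) (b x)} := by
    intro i
    refine (measure_mono fun x hx => ?_).trans (measure_union_le _ _)
    by_contra! hlt
    simp only [Set.mem_union, Set.mem_ofPred_eq, not_or, not_le] at hx hlt
    have := (edist_add_add_le _ _ _ _).trans_lt (ENNReal.add_lt_add hlt.1 hlt.2)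
    exact (ENNReal.add_halves ε ▸ this).not_ge hx
  have hε2 : ε / 2 ≠ 0 := (ENNReal.half_pos hε.ne').ne'
  have hhalf := (hf (ε / 2) hε2.bot_lt).add (hg (ε / 2) hε2.bot_lt)
  rw [add_zero] at hhalf
  exact tendsto_of_tendsto_of_tendsto_of_le_of_le tendsto_const_nhds hhalf (fun _ => zero_le)
    hsplit

theorem tendsto_eLpNorm_one_sub_of_tendsto_of_norm_le [NormedAddCommGroup E]
    [IsFiniteMeasure μ] {F : ℕ → α → E} {f : α → E} (hF : ∀ N, AEStronglyMeasurable (F N) μ) {C : ℝ}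
    (hC : ∀ N x, ‖F N x‖ ≤ C) (hlim : ∀ x, Tendsto (fun N => F N x) atTop (nhds (f x))) :
    Tendsto (fun N => eLpNorm (F N - f) 1 μ) atTop (nhds 0) := by
  simp only [eLpNorm_one_eq_lintegral_enorm, Pi.sub_apply, ← ofReal_norm]
  exact tendsto_lintegral_norm_of_dominated_convergence hF (hasFiniteIntegral_const C)
    (fun N => ae_of_all _ (hC N)) (ae_of_all _ hlim)

end MeasureTheory

namespace ProbabilityTheory

variable {Ω : Type*} [MeasurableSpace Ω] {μ : Measure Ω}

theorem aestronglyMeasurable_average {Y : ℕ → Ω → ℝ} (hY : ∀ i, AEStronglyMeasurable (Y i) μ)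
    (N : ℕ) : AEStronglyMeasurable (fun ω => (N : ℝ)⁻¹ * ∑ i ∈ Finset.range N, Y i ω) μ :=
  (Finset.aestronglyMeasurable_fun_sum _ fun i _ => hY i).const_mul _

theorem eLpNorm_average_le_of_identDistrib {p : ENNReal} (hp : 1 ≤ p) {Y : ℕ → Ω → ℝ}
    (hY : ∀ i, IdentDistrib (Y i) (Y 0) μ μ) (N : ℕ) :
    eLpNorm (fun ω => (N : ℝ)⁻¹ * ∑ i ∈ Finset.range N, Y i ω) p μ ≤
      eLpNorm (Y 0) p μ := by
  rcases N.eq_zero_or_pos with rfl | hN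
  · simp
  have hsum : eLpNorm (∑ i ∈ Finset.range N, Y i) p μ ≤ N * eLpNorm (Y 0) p μ := by
    refine (eLpNorm_sum_le (fun i _ => (hY i).aestronglyMeasurable_fst) hp).trans_eq ?_
    simp [(hY _).eLpNorm_eq]
  calc eLpNorm (fun ω => (N : ℝ)⁻¹ * ∑ i ∈ Finset.range N, Y i ω) p μ
      = ‖(N : ℝ)⁻¹‖ₑ * eLpNorm (∑ i ∈ Finset.range N, Y i) p μ := by
        rw [← eLpNorm_const_smul]; congr 1; ext ω; simp
    _ ≤ ‖(N : ℝ)⁻¹‖ₑ * (N * eLpNorm (Y 0) p μ) := by gcongr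
    _ = eLpNorm (Y 0) p μ := by
        rw [← mul_assoc, ← ofReal_norm, norm_inv, Real.norm_natCast,
          ENNReal.ofReal_inv_of_pos (by exact_mod_cast hN), ENNReal.ofReal_natCast,
          ENNReal.inv_mul_cancel (by simp [hN.ne']) (by simp), one_mul]

theorem tendstoInMeasure_average_of_tendsto_eLpNorm {Y : ℕ → ℕ → Ω → ℝ}
    (hY : ∀ N i, IdentDistrib (Y N i) (Y N 0) μ μ)
    (hlim : Tendsto (fun N => eLpNorm (Y N 0) 1 μ) atTop (nhds 0)) :
    TendstoInMeasure μ (fun (N : ℕ) ω => (N : ℝ)⁻¹ * ∑ i ∈ Finset.range N, Y N i ω) atTop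
      0 := by
  refine tendstoInMeasure_of_tendsto_eLpNorm one_ne_zero
    (fun N => aestronglyMeasurable_average (fun i => (hY N i).aestronglyMeasurable_fst) N)
    aestronglyMeasurable_const ?_
  simp only [sub_zero]
  exact tendsto_of_tendsto_of_tendsto_of_le_of_le tendsto_const_nhds hlim (fun _ => zero_le)
    fun N => eLpNorm_average_le_of_identDistrib le_rfl (hY N) N

theorem tendstoInMeasure_average_of_pairwise_indepFun [IsFiniteMeasure μ] {Y : ℕ → Ω → ℝ}
    (hint : Integrable (Y 0) μ) (hindep : Pairwise (Function.onFun (IndepFun · · μ) Y))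
    (hident : ∀ i, IdentDistrib (Y i) (Y 0) μ μ) :
    TendstoInMeasure μ (fun (N : ℕ) ω => (N : ℝ)⁻¹ * ∑ i ∈ Finset.range N, Y i ω) atTop
      (fun _ => μ[Y 0]) := by
  refine tendstoInMeasure_of_tendsto_ae
    (aestronglyMeasurable_average fun i => (hident i).aestronglyMeasurable_fst) ?_
  filter_upwards [strong_law_ae_real Y hint hindep hident] with ω hω
  simpa only [div_eq_inv_mul] using hω

end ProbabilityTheory

theorem stmt18 {Ω : Type*} [MeasurableSpace Ω] (P : Measure Ω) [IsProbabilityMeasure P]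
    (m n : ℕ)
    -- `(v^i)` are i.i.d. random vectors in `ℝ^m`
    (v : ℕ → Ω → (Fin m → ℝ)) (hv_meas : ∀ i, Measurable (v i))
    (hv_indep : iIndepFun v P)
    (hv_ident : ∀ i, Measure.map (v i) P = Measure.map (v 0) P)
    -- `γ_N → γ` pointwise, all Borel measurable
    (γN : ℕ → (Fin m → ℝ) → (Fin n → ℝ)) (hγN_meas : ∀ N, Measurable (γN N))
    (γ : (Fin m → ℝ) → (Fin n → ℝ)) (hγ_meas : Measurable γ)
    (hconv_pt : ∀ x, Filter.Tendsto (fun N => γN N x) Filter.atTop (nhds (γ x)))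
    -- a bounded continuous test function `g`
    (g : (Fin n → ℝ) × (Fin m → ℝ) → ℝ) (hg_cont : Continuous g)
    (hg_bdd : ∃ C : ℝ, ∀ p, |g p| ≤ C) :
    -- then the empirical averages `(1/N) Σ_{i<N} g(γ_N(v^i), v^i)` converge in
    -- probability to `E[g(γ(v¹), v¹)]`
    TendstoInMeasure P
      (fun (N : ℕ) ω => (N : ℝ)⁻¹ * ∑ i ∈ Finset.range N, g (γN N (v i ω), v i ω))
      Filter.atTop
      (fun _ => ∫ ω, g (γ (v 0 ω), v 0 ω) ∂P) := by
  obtain ⟨C, hC⟩ := hg_bdd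
  set F : ℕ → (Fin m → ℝ) → ℝ := fun N x => g (γN N x, x)
  set f : (Fin m → ℝ) → ℝ := fun x => g (γ x, x)
  have hF : ∀ N, Measurable (F N) := fun N =>
    hg_cont.measurable.comp ((hγN_meas N).prodMk measurable_id)
  have hf : Measurable f := hg_cont.measurable.comp (hγ_meas.prodMk measurable_id)
  have hv : ∀ i, IdentDistrib (v i) (v 0) P P := fun i =>
    ⟨(hv_meas i).aemeasurable, (hv_meas 0).aemeasurable, hv_ident i⟩
  have hlln := tendstoInMeasure_average_of_pairwise_indepFun (Y := fun i => f ∘ v i)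
    (.of_bound (hf.comp (hv_meas 0)).aestronglyMeasurable C (ae_of_all _ fun ω => hC _))
    (fun i j hij => (hv_indep.indepFun hij).comp hf hf) (fun i => (hv i).comp hf)
  have herr := tendstoInMeasure_average_of_tendsto_eLpNorm
    (Y := fun N i => (F N - f) ∘ v i) (fun N i => (hv i).comp ((hF N).sub hf))
    (tendsto_eLpNorm_one_sub_of_tendsto_of_norm_le
      (fun N => ((hF N).comp (hv_meas 0)).aestronglyMeasurable) (fun N ω => hC _)
      fun ω => (hg_cont.tendsto _).comp ((hconv_pt (v 0 ω)).prodMk_nhds tendsto_const_nhds))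
  refine (herr.add hlln).congr (fun N => ae_of_all _ fun ω => ?_) (ae_of_all _ fun ω => zero_add _)
  simp only [Function.comp_apply, Pi.sub_apply, Finset.sum_sub_distrib, F, f]
  ring
end

section
/- Let x : Ω → ℝ^d be a random vector, (z^i)_{i∈ℕ} i.i.d. random vectors in ℝ^k independent of x, h : ℝ^d × ℝ^k → ℝ^m Borel measurable, and set v^i = h(x, z^i). Then for every Borel measurable γ : ℝ^m → ℝ^n and every bounded continuous g : ℝ^n × ℝ^m → ℝ, the averages (1/N) Σ_{i=1}^N g(γ(v^i), v^i) converge in L²(ℙ) (and hence in probability) to the conditional expectation E[g(γ(v¹), v¹) | σ(x)] as N → ∞. -/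
open MeasureTheory Filter ProbabilityTheory Finset
open scoped Topology

/-! With `f(a, b) = g(γ(h(a, b)), h(a, b))`, `ν` the common law of the `z^i` and
`φ(a) = ∫ f(a, ·) dν`, independence of `x` and `z⁰` makes `φ ∘ x` a version of
`E[f(x, z⁰) | σ(x)]`. The centred variables `W_i = f(x, z^i) - φ(x)` are bounded by `2C`, and
pairwise orthogonal: for `i ≠ j` the law of `(x, z^i, z^j)` is `law x ⊗ ν ⊗ ν`, so
`E[W_i W_j] = ∫ (∫ (f(a, ·) - φ(a)) dν)² d(law x) = 0`. Hence `E[(N⁻¹ ∑ W_i)²] ≤ 4C²/N`, which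
gives the `L²` convergence, and convergence in measure follows from it. -/

lemma abs_sub_integral_le {β : Type*} [MeasurableSpace β] {ν : Measure β} [IsProbabilityMeasure ν]
    {g : β → ℝ} {C : ℝ} (hC : ∀ b, |g b| ≤ C) (b : β) : |g b - ∫ b', g b' ∂ν| ≤ 2 * C := by
  have : |∫ b', g b' ∂ν| ≤ C := by
    simpa [Real.norm_eq_abs] using norm_integral_le_of_norm_le_const (μ := ν)
      (Eventually.of_forall fun b' => (Real.norm_eq_abs _).trans_le (hC b'))
  linarith [abs_sub (g b) (∫ b', g b' ∂ν), hC b]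

lemma inv_mul_sum_range_sub {N : ℕ} (hN : N ≠ 0) (a : ℕ → ℝ) (c : ℝ) :
    (N : ℝ)⁻¹ * ∑ i ∈ range N, (a i - c) = (N : ℝ)⁻¹ * ∑ i ∈ range N, a i - c := by
  rw [sum_sub_distrib, sum_const, card_range, nsmul_eq_mul, mul_sub,
    inv_mul_cancel_left₀ (Nat.cast_ne_zero.2 hN)]

section PairwiseOrthogonal

variable {Ω : Type*} [MeasurableSpace Ω] {P : Measure Ω} {W : ℕ → Ω → ℝ}

lemma integral_sq_sum_of_pairwise_orthogonal (hW : ∀ i, MemLp (W i) 2 P)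
    (horth : Pairwise fun i j => ∫ ω, W i ω * W j ω ∂P = 0) (s : Finset ℕ) :
    ∫ ω, (∑ i ∈ s, W i ω) ^ 2 ∂P = ∑ i ∈ s, ∫ ω, W i ω ^ 2 ∂P := by
  have hint : ∀ i j, Integrable (fun ω => W i ω * W j ω) P := fun i j =>
    (hW i).integrable_mul (hW j)
  calc ∫ ω, (∑ i ∈ s, W i ω) ^ 2 ∂P = ∑ i ∈ s, ∑ j ∈ s, ∫ ω, W i ω * W j ω ∂P := by
        simp_rw [sq, sum_mul_sum]
        rw [integral_finsetSum _ fun i _ => integrable_finsetSum _ fun j _ => hint i j]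
        exact sum_congr rfl fun i _ => integral_finsetSum _ fun j _ => hint i j
    _ = ∑ i ∈ s, ∫ ω, W i ω ^ 2 ∂P := by
        refine sum_congr rfl fun i hi => ?_
        rw [sum_eq_single_of_mem i hi fun j _ hji => horth hji.symm]
        simp_rw [sq]

lemma integral_sq_average_le_of_pairwise_orthogonal (hW : ∀ i, MemLp (W i) 2 P)
    (horth : Pairwise fun i j => ∫ ω, W i ω * W j ω ∂P = 0) {B : ℝ}
    (hB : ∀ i, ∫ ω, W i ω ^ 2 ∂P ≤ B) (N : ℕ) :
    ∫ ω, ((N : ℝ)⁻¹ * ∑ i ∈ range N, W i ω) ^ 2 ∂P ≤ B / N := by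
  simp_rw [mul_pow]
  rw [integral_const_mul, integral_sq_sum_of_pairwise_orthogonal hW horth]
  calc ((N : ℝ)⁻¹) ^ 2 * ∑ i ∈ range N, ∫ ω, W i ω ^ 2 ∂P ≤ ((N : ℝ)⁻¹) ^ 2 * (N * B) := by
        gcongr
        simpa using sum_le_card_nsmul (range N) _ B fun i _ => hB i
    _ = B / N := by
        rcases eq_or_ne (N : ℝ) 0 with hN | hN
        · simp [hN]
        · field_simp

lemma eLpNorm_two_eq_ofReal_sqrt_integral_sq {f : Ω → ℝ} (hf : MemLp f 2 P) :
    eLpNorm f 2 P = ENNReal.ofReal √(∫ ω, f ω ^ 2 ∂P) := by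
  rw [hf.eLpNorm_eq_integral_rpow_norm two_ne_zero ENNReal.ofNat_ne_top, Real.sqrt_eq_rpow]
  simp [Real.norm_eq_abs]

theorem tendsto_eLpNorm_average_of_pairwise_orthogonal (hW : ∀ i, MemLp (W i) 2 P)
    (horth : Pairwise fun i j => ∫ ω, W i ω * W j ω ∂P = 0) {B : ℝ}
    (hB : ∀ i, ∫ ω, W i ω ^ 2 ∂P ≤ B) :
    Tendsto (fun N : ℕ => eLpNorm (fun ω => (N : ℝ)⁻¹ * ∑ i ∈ range N, W i ω) 2 P)
      atTop (𝓝 0) := by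
  have hlim : Tendsto (fun N : ℕ => ENNReal.ofReal √(B / N)) atTop (𝓝 0) := by
    have := ((ENNReal.continuous_ofReal.comp Real.continuous_sqrt).tendsto 0).comp
      (tendsto_const_div_atTop_nhds_zero_nat B)
    simpa only [Function.comp_def, Real.sqrt_zero, ENNReal.ofReal_zero] using this
  refine tendsto_of_tendsto_of_tendsto_of_le_of_le tendsto_const_nhds hlim (fun _ => zero_le)
    fun N => ?_
  rw [eLpNorm_two_eq_ofReal_sqrt_integral_sq ((memLp_finsetSum _ fun i _ => hW i).const_mul _)]
  gcongr
  exact integral_sq_average_le_of_pairwise_orthogonal hW horth hB N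

theorem tendsto_eLpNorm_average_of_pairwise_orthogonal_of_abs_le [IsProbabilityMeasure P]
    (hW : ∀ i, AEStronglyMeasurable (W i) P)
    (horth : Pairwise fun i j => ∫ ω, W i ω * W j ω ∂P = 0) {B : ℝ} (hB : ∀ i ω, |W i ω| ≤ B) :
    Tendsto (fun N : ℕ => eLpNorm (fun ω => (N : ℝ)⁻¹ * ∑ i ∈ range N, W i ω) 2 P)
      atTop (𝓝 0) := by
  have hmem : ∀ i, MemLp (W i) 2 P := fun i =>
    .of_bound (hW i) B (Eventually.of_forall fun ω => (Real.norm_eq_abs _).trans_le (hB i ω))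
  refine tendsto_eLpNorm_average_of_pairwise_orthogonal hmem horth (B := B ^ 2) fun i => ?_
  calc ∫ ω, W i ω ^ 2 ∂P ≤ ∫ _ω, B ^ 2 ∂P :=
        integral_mono (hmem i).integrable_sq (integrable_const _) fun ω => by
          rw [← sq_abs]
          exact pow_le_pow_left₀ (abs_nonneg _) (hB i ω) 2
    _ = B ^ 2 := by simp

end PairwiseOrthogonal

section IndependentNoise

variable {Ω α β : Type*} [MeasurableSpace Ω] [MeasurableSpace α] [MeasurableSpace β]
  {P : Measure Ω} {X : Ω → α}

theorem condExp_comap_ae_eq_integral_of_indepFun [IsFiniteMeasure P] {E : Type*} [NormedAddCommGroup E]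
    [NormedSpace ℝ E] [CompleteSpace E] [StandardBorelSpace β] [Nonempty β] {Y : Ω → β}
    (hX : Measurable X) (hY : Measurable Y) (hXY : IndepFun X Y P) {f : α × β → E}
    (hf : StronglyMeasurable f) (hf_int : Integrable (fun ω => f (X ω, Y ω)) P) :
    P[fun ω => f (X ω, Y ω) | MeasurableSpace.comap X inferInstance] =ᵐ[P]
      fun ω => ∫ y, f (X ω, y) ∂P.map Y := by
  -- independence says that the conditional law of `Y` given `X` is the constant kernel
  have hκ : condDistrib Y X P =ᵐ[P.map X] Kernel.const α (P.map Y) := by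
    rw [condDistrib_ae_eq_iff_measure_eq_compProd X hY.aemeasurable, Measure.compProd_const]
    exact hXY.map_prod_eq_prod_map_map hX.aemeasurable hY.aemeasurable
  filter_upwards [condExp_prod_ae_eq_integral_condDistrib hX hY.aemeasurable hf hf_int,
    ae_of_ae_map hX.aemeasurable hκ] with ω hω hκω
  rw [hω, hκω, Kernel.const_apply]

theorem integral_mul_centered_eq_zero_of_indepFun [IsProbabilityMeasure P] {Y Y' : Ω → β} {ν : Measure β}
    (hX : Measurable X) (hY : Measurable Y) (hY' : Measurable Y')
    (hXY : IndepFun X (fun ω => (Y ω, Y' ω)) P) (hYY : IndepFun Y Y' P)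
    (hν : P.map Y = ν) (hν' : P.map Y' = ν) {f : α × β → ℝ} (hf : Measurable f) {C : ℝ}
    (hC : ∀ p, |f p| ≤ C) :
    ∫ ω, (f (X ω, Y ω) - ∫ b, f (X ω, b) ∂ν) * (f (X ω, Y' ω) - ∫ b, f (X ω, b) ∂ν) ∂P = 0 := by
  have : IsProbabilityMeasure ν := hν ▸ Measure.isProbabilityMeasure_map hY.aemeasurable
  set φ : α → ℝ := fun a => ∫ b, f (a, b) ∂ν
  have hφ : Measurable φ := hf.stronglyMeasurable.integral_prod_right'.measurable
  have hcentered : ∀ a, ∫ b, (f (a, b) - φ a) ∂ν = 0 := fun a => by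
    have hfa : Integrable (fun b => f (a, b)) ν :=
      .of_bound (hf.comp measurable_prodMk_left).aestronglyMeasurable C
        (Eventually.of_forall fun b => (Real.norm_eq_abs _).trans_le (hC (a, b)))
    rw [integral_sub hfa (integrable_const _), integral_const, probReal_univ, one_smul, sub_self]
  set G : α × β × β → ℝ := fun p => (f (p.1, p.2.1) - φ p.1) * (f (p.1, p.2.2) - φ p.1)
  have hG : Measurable G := by fun_prop
  have hlaw : P.map (fun ω => (X ω, Y ω, Y' ω)) = (P.map X).prod (ν.prod ν) := by
    rw [hXY.map_prod_eq_prod_map_map hX.aemeasurable (hY.prodMk hY').aemeasurable,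
      hYY.map_prod_eq_prod_map_map hY.aemeasurable hY'.aemeasurable, hν, hν']
  have hG_int : Integrable G ((P.map X).prod (ν.prod ν)) := by
    have hdev : ∀ a b, |f (a, b) - φ a| ≤ 2 * C := fun a b =>
      abs_sub_integral_le (g := fun b => f (a, b)) (fun b => hC (a, b)) b
    refine .of_bound hG.aestronglyMeasurable ((2 * C) * (2 * C)) (Eventually.of_forall fun p => ?_)
    rw [Real.norm_eq_abs, abs_mul]
    exact mul_le_mul (hdev _ _) (hdev _ _) (abs_nonneg _) ((abs_nonneg _).trans (hdev p.1 p.2.1))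
  calc _ = ∫ p, G p ∂(P.map X).prod (ν.prod ν) := by
        rw [← hlaw, integral_map (hX.prodMk (hY.prodMk hY')).aemeasurable hG.aestronglyMeasurable]
    _ = ∫ a, (∫ b, (f (a, b) - φ a) ∂ν) * ∫ b, (f (a, b) - φ a) ∂ν ∂P.map X := by
        rw [integral_prod _ hG_int]
        exact integral_congr_ae (Eventually.of_forall fun a =>
          integral_prod_mul (fun b => f (a, b) - φ a) (fun b => f (a, b) - φ a))
    _ = 0 := by simp [hcentered]

end IndependentNoise

theorem stmt19 {Ω : Type*} [MeasurableSpace Ω] (P : Measure Ω) [IsProbabilityMeasure P]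
    (d k m n : ℕ)
    -- `x` a random vector, `(z^i)` i.i.d. independent of `x`, `v^i = h(x, z^i)`
    (x : Ω → (Fin d → ℝ)) (hx_meas : Measurable x)
    (z : ℕ → Ω → (Fin k → ℝ)) (hz_meas : ∀ i, Measurable (z i))
    (hz_indep : iIndepFun z P)
    (hz_ident : ∀ i, Measure.map (z i) P = Measure.map (z 0) P)
    (hxz_indep : IndepFun x (fun ω => fun i => z i ω) P)
    (h : (Fin d → ℝ) → (Fin k → ℝ) → (Fin m → ℝ))
    (hh_meas : Measurable (fun p : (Fin d → ℝ) × (Fin k → ℝ) => h p.1 p.2))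
    (v : ℕ → Ω → (Fin m → ℝ)) (hv_eq : ∀ i ω, v i ω = h (x ω) (z i ω))
    -- a Borel measurable `γ` and a bounded continuous test function `g`
    (γ : (Fin m → ℝ) → (Fin n → ℝ)) (hγ_meas : Measurable γ)
    (g : (Fin n → ℝ) × (Fin m → ℝ) → ℝ) (hg_cont : Continuous g)
    (hg_bdd : ∃ C : ℝ, ∀ p, |g p| ≤ C) :
    -- then the empirical averages converge to `E[g(γ(v¹), v¹) | σ(x)]` in `L²(ℙ)` …
    Filter.Tendsto (fun N : ℕ => eLpNorm
      (fun ω => (N : ℝ)⁻¹ * ∑ i ∈ Finset.range N, g (γ (v i ω), v i ω) -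
        (P[fun ω' => g (γ (v 0 ω'), v 0 ω')|MeasurableSpace.comap x inferInstance]) ω)
      2 P) Filter.atTop (nhds 0) ∧
    -- … and hence in probability
    TendstoInMeasure P
      (fun (N : ℕ) ω => (N : ℝ)⁻¹ * ∑ i ∈ Finset.range N, g (γ (v i ω), v i ω))
      Filter.atTop
      (P[fun ω' => g (γ (v 0 ω'), v 0 ω')|MeasurableSpace.comap x inferInstance]) := by
  obtain ⟨C, hC⟩ := hg_bdd
  set f : (Fin d → ℝ) × (Fin k → ℝ) → ℝ := fun p => g (γ (h p.1 p.2), h p.1 p.2)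
  have hf : Measurable f := hg_cont.measurable.comp ((hγ_meas.comp hh_meas).prodMk hh_meas)
  set ν := P.map (z 0)
  have hcond := condExp_comap_ae_eq_integral_of_indepFun hx_meas (hz_meas 0)
    (hxz_indep.comp measurable_id (measurable_pi_apply 0))
    hf.stronglyMeasurable (.of_bound (hf.comp (hx_meas.prodMk (hz_meas 0))).aestronglyMeasurable C
      (Eventually.of_forall fun ω => (Real.norm_eq_abs _).trans_le (hC _)))
  set W : ℕ → Ω → ℝ := fun i ω => f (x ω, z i ω) - ∫ b, f (x ω, b) ∂ν
  have hW : Tendsto (fun N : ℕ => eLpNorm (fun ω => (N : ℝ)⁻¹ * ∑ i ∈ range N, W i ω) 2 P)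
      atTop (𝓝 0) := by
    have : IsProbabilityMeasure ν := Measure.isProbabilityMeasure_map (hz_meas 0).aemeasurable
    refine tendsto_eLpNorm_average_of_pairwise_orthogonal_of_abs_le
      (fun i => ((hf.comp (hx_meas.prodMk (hz_meas i))).sub
        (hf.stronglyMeasurable.integral_prod_right'.measurable.comp hx_meas)).aestronglyMeasurable)
      (fun i j hij => integral_mul_centered_eq_zero_of_indepFun hx_meas (hz_meas i) (hz_meas j)
        (hxz_indep.comp measurable_id ((measurable_pi_apply i).prodMk (measurable_pi_apply j)))
        (hz_indep.indepFun hij) (hz_ident i) (hz_ident j) hf (fun p => hC _))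
      fun i ω => abs_sub_integral_le (g := fun b => f (x ω, b)) (fun b => hC _) (z i ω)
  have hL2 : Tendsto (fun N : ℕ => eLpNorm (fun ω => (N : ℝ)⁻¹ * ∑ i ∈ range N, f (x ω, z i ω) -
      P[fun ω' => f (x ω', z 0 ω')|MeasurableSpace.comap x inferInstance] ω) 2 P) atTop (𝓝 0) := by
    refine hW.congr' ((eventually_ne_atTop 0).mono fun N hN => eLpNorm_congr_ae ?_)
    filter_upwards [hcond] with ω hω
    rw [hω, inv_mul_sum_range_sub hN]
  simp only [hv_eq]
  refine ⟨hL2, tendstoInMeasure_of_tendsto_eLpNorm two_ne_zero (fun N => ?_)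
    (stronglyMeasurable_condExp.mono hx_meas.comap_le).aestronglyMeasurable hL2⟩
  exact ((measurable_sum _ fun i _ => hf.comp (hx_meas.prodMk (hz_meas i))).const_mul
    _).aestronglyMeasurable
end
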